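/- arXiv:1905.03091 — 2 statements merged into one kernel-verified Lean document; each statement's English description precedes it below -/
import Mathlib

section
/- Let p be a prime, F a field of characteristic p, and x an element of a commutative F-algebra with x^p = 1. Then x^(-1) · (1 - x^(-1))^(p-2) = \sum_{j=1}^{p-1} j · x^(-j). -/
/-!
Multiplying by `(1 - y) ^ 2` turns `y * (1 - y) ^ (p - 2)` into `y * (1 - y) ^ p = y - y ^ (p + 1)`
(Frobenius) and `∑_{j=1}^{p-1} j y^j` into `y - p y ^ p + (p - 1) y ^ (p + 1)`, which agree modulo `p`.
Since `(1 - X) ^ 2` is a non-zero-divisor in `R[X]`, the factor cancels for the variable `X`, and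
evaluating at `y = x ^ (p - 1)` gives the theorem.
-/

open Polynomial Finset

theorem sum_Icc_natCast_mul_pow_mul_one_sub_sq {S : Type*} [CommRing S] (x : S) (n : ℕ) :
    (∑ j ∈ Icc 1 n, (j : S) * x ^ j) * (1 - x) ^ 2 =
      x - (n + 1) * x ^ (n + 1) + n * x ^ (n + 2) := by
  induction n with
  | zero => simp
  | succ n ih =>
    rw [sum_Icc_succ_top (by omega), add_mul, ih]
    push_cast
    ring

section CharP

variable {R : Type*} [CommRing R] (p : ℕ) [Fact p.Prime] [CharP R p]

theorem X_mul_one_sub_X_pow_sub_two_eq_sum :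
    (X : R[X]) * (1 - X) ^ (p - 2) = ∑ j ∈ Icc 1 (p - 1), (j : R[X]) * X ^ j := by
  obtain ⟨n, rfl⟩ := Nat.exists_eq_add_of_le' (Fact.out : p.Prime).two_le
  have hreg : IsRegular ((1 - X : R[X]) ^ 2) := by
    rw [show (1 - X : R[X]) ^ 2 = (X - C 1) ^ 2 by rw [C_1]; ring]
    exact ((monic_X_sub_C 1).pow 2).isRegular
  have hfrob : (1 - X : R[X]) ^ (n + 2) = 1 - X ^ (n + 2) := by
    rw [sub_pow_char, one_pow]
  have hchar : ((n + 2 : ℕ) : R[X]) = 0 := CharP.cast_eq_zero _ _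
  have hsum := sum_Icc_natCast_mul_pow_mul_one_sub_sq (X : R[X]) (n + 1)
  push_cast at hsum hchar
  rw [show n + 2 - 2 = n from rfl, show n + 2 - 1 = n + 1 from rfl]
  apply hreg.right
  linear_combination X * hfrob - hsum + (X ^ (n + 2) - X ^ (n + 3)) * hchar

theorem mul_one_sub_pow_sub_two_eq_sum (y : R) :
    y * (1 - y) ^ (p - 2) = ∑ j ∈ Icc 1 (p - 1), (j : R) * y ^ j := by
  simpa [eval_finsetSum] using congrArg (eval y) (X_mul_one_sub_X_pow_sub_two_eq_sum (R := R) p)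

end CharP

theorem stmt_2_general (p : ℕ) (hp : p.Prime) (F : Type*) [Field F] [CharP F p]
    (A : Type*) [CommRing A] [Algebra F A] (x : A) :
    x ^ (p - 1) * (1 - x ^ (p - 1)) ^ (p - 2) =
      ∑ j ∈ Finset.Icc 1 (p - 1), (j : A) * (x ^ (p - 1)) ^ j := by
  nontriviality A
  have : Fact p.Prime := ⟨hp⟩
  have : CharP A p := charP_of_injective_algebraMap (algebraMap F A).injective p
  exact mul_one_sub_pow_sub_two_eq_sum p _

/-- If `F` is a field of characteristic `p` (a prime) and `x` is an element of a commutative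
`F`-algebra with `x ^ p = 1` (so `x` is invertible with `x⁻¹ = x ^ (p - 1)`), then
`x⁻¹ * (1 - x⁻¹) ^ (p - 2) = ∑_{j=1}^{p-1} j * x^{-j}`. -/
theorem stmt_2 (p : ℕ) (hp : p.Prime) (F : Type*) [Field F] [CharP F p]
    (A : Type*) [CommRing A] [Algebra F A] (x : A) (hx : x ^ p = 1) :
    x ^ (p - 1) * (1 - x ^ (p - 1)) ^ (p - 2) =
      ∑ j ∈ Finset.Icc 1 (p - 1), (j : A) * (x ^ (p - 1)) ^ j :=
  stmt_2_general p hp F A x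
end

section
/- Let p be a prime, a ≥ 1, F a field of characteristic p, and R = F[λ_1,...,λ_a]/(λ_1^p,...,λ_a^p) with maximal ideal I, and L = a(p-1). Let J be the set of generators λ_1,...,λ_a. For every 0 ≤ k ≤ L-1, the map I^{L-k-1}/I^{L-k} → ⊕_{i=1}^a I^{L-k}/I^{L-k+1} sending [x] to ([x·λ_1],...,[x·λ_a]) is injective. -/
/-!
Write `R = F[X]/(X_i^p)`. The preimage of `I^n` in `F[X]` is the monomial ideal spanned by the
monomials of degree `≥ n` or with some exponent `≥ p`. If `x = [f]` lies in `I^{m-1}` but not in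
`I^m`, where `1 ≤ m ≤ a(p - 1)`, then `f` has a monomial `X^d` of degree `m - 1` with all
exponents `< p`. Since `m - 1 < a(p - 1)`, some exponent satisfies `d_i < p - 1`, and then
`X^d X_i` is a monomial of `f X_i` of degree `m` with all exponents `< p`, so `x λ_i ∉ I^{m+1}`.
-/

open Finsupp MvPolynomial

namespace MvPolynomial

variable {σ R : Type*} [CommSemiring R]

theorem pow_idealOfVars_eq_span_monomial_degree_ge (n : ℕ) :
    idealOfVars σ R ^ n = Ideal.span ((monomial · 1) '' {d | n ≤ degree d}) := by
  ext g
  rw [mem_pow_idealOfVars_iff, mem_ideal_span_monomial_image]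
  exact forall₂_congr fun d _ =>
    ⟨fun h => ⟨d, h, le_rfl⟩, fun ⟨e, he, hed⟩ => he.trans (degree_mono hed)⟩

/-- The preimage of `I ^ n` in the polynomial ring, for `I` the maximal ideal of
`R[X] / (X_i ^ p)`. -/
noncomputable def idealOfVarsPowSupXPow (σ R : Type*) [CommSemiring R] (p n : ℕ) :
    Ideal (MvPolynomial σ R) :=
  idealOfVars σ R ^ n ⊔ Ideal.span (Set.range fun i => X i ^ p)

theorem mem_idealOfVarsPowSupXPow_iff {p n : ℕ} {f : MvPolynomial σ R} :
    f ∈ idealOfVarsPowSupXPow σ R p n ↔ ∀ d ∈ f.support, n ≤ degree d ∨ ∃ i, p ≤ d i := by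
  have hXpow : (Set.range fun i => (X i ^ p : MvPolynomial σ R)) =
      (monomial · 1) '' Set.range (single · p) := by
    simp only [X_pow_eq_monomial, ← Set.range_comp, Function.comp_def]
  rw [idealOfVarsPowSupXPow, pow_idealOfVars_eq_span_monomial_degree_ge, hXpow,
    ← Ideal.span_union, ← Set.image_union, mem_ideal_span_monomial_image]
  refine forall₂_congr fun d _ => ⟨?_, ?_⟩
  · rintro ⟨e, he | ⟨i, rfl⟩, hed⟩
    · exact Or.inl (he.trans (degree_mono hed))
    · exact Or.inr ⟨i, single_le_iff.1 hed⟩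
  · rintro (h | ⟨i, hi⟩)
    · exact ⟨d, Or.inl h, le_rfl⟩
    · exact ⟨single i p, Or.inr ⟨i, rfl⟩, single_le_iff.2 hi⟩

theorem exists_lt_pred_of_degree_lt [Fintype σ] {p : ℕ} {d : σ →₀ ℕ}
    (hd : degree d < Fintype.card σ * (p - 1)) : ∃ i, d i < p - 1 := by
  by_contra! h
  have : Fintype.card σ * (p - 1) ≤ degree d := by
    simpa [degree_eq_sum] using Finset.sum_le_sum fun i (_ : i ∈ Finset.univ) => h i
  omega

theorem mem_idealOfVarsPowSupXPow_of_mul_X_mem [Fintype σ] {p m : ℕ}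
    (hm : m ≤ Fintype.card σ * (p - 1)) {f : MvPolynomial σ R}
    (hf : f ∈ idealOfVarsPowSupXPow σ R p (m - 1))
    (hfX : ∀ i, f * X i ∈ idealOfVarsPowSupXPow σ R p (m + 1)) :
    f ∈ idealOfVarsPowSupXPow σ R p m := by
  classical
  rw [mem_idealOfVarsPowSupXPow_iff] at hf ⊢
  intro d hd
  by_contra! hcon
  obtain ⟨hdeg, hexp⟩ := hcon
  have hdeg' : degree d = m - 1 := by
    rcases hf d hd with h | ⟨i, hi⟩
    · omega
    · exact absurd hi (hexp i).not_ge
  obtain ⟨i, hi⟩ := exists_lt_pred_of_degree_lt (p := p) (d := d) (by omega)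
  have hdi : d + single i 1 ∈ (f * X i).support := by
    rw [mem_support_iff, coeff_mul_X]
    exact mem_support_iff.1 hd
  rcases (mem_idealOfVarsPowSupXPow_iff.1 (hfX i)) _ hdi with h | ⟨j, hj⟩
  · rw [map_add, degree_single] at h
    omega
  · rw [Finsupp.add_apply, single_apply] at hj
    split_ifs at hj with hij
    · subst hij; omega
    · exact (hexp j).not_ge (by simpa using hj)

end MvPolynomial

theorem stmt_10_general (p a : ℕ) (F : Type*) [Field F]
    (k : ℕ)
    (J : Ideal (MvPolynomial (Fin a) F))
    (hJ : J = Ideal.span (Set.range fun i : Fin a => MvPolynomial.X i ^ p))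
    (lam : Fin a → (MvPolynomial (Fin a) F ⧸ J))
    (hlam : ∀ i, lam i = Ideal.Quotient.mk J (MvPolynomial.X i))
    (I : Ideal (MvPolynomial (Fin a) F ⧸ J))
    (hI : I = Ideal.span (Set.range lam)) :
    ∀ x : MvPolynomial (Fin a) F ⧸ J, x ∈ I ^ (a * (p - 1) - k - 1) →
      (∀ i : Fin a, x * lam i ∈ I ^ (a * (p - 1) - k + 1)) →
      x ∈ I ^ (a * (p - 1) - k) := by
  intro x hx hxlam
  have hI' : I = (idealOfVars (Fin a) F).map (Ideal.Quotient.mk J) := by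
    rw [hI, Ideal.map_span, ← Set.range_comp, funext hlam]
    rfl
  have hmem : ∀ n f, Ideal.Quotient.mk J f ∈ I ^ n ↔ f ∈ idealOfVarsPowSupXPow (Fin a) F p n := by
    intro n f
    rw [hI', ← Ideal.map_pow, Ideal.mem_quotient_iff_mem_sup, hJ, idealOfVarsPowSupXPow]
  obtain ⟨f, rfl⟩ := Ideal.Quotient.mk_surjective x
  rw [hmem] at hx ⊢
  refine mem_idealOfVarsPowSupXPow_of_mul_X_mem (by simp) hx fun i => ?_
  rw [← hmem, map_mul, ← hlam]
  exact hxlam i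

/-- Let `p` be prime, `a ≥ 1`, `F` a field of characteristic `p`,
`R = F[λ_1, …, λ_a]/(λ_1^p, …, λ_a^p)` with maximal ideal `I`, and `L = a(p-1)`.  For every
`0 ≤ k ≤ L - 1`, the map `I^{L-k-1}/I^{L-k} → ⊕_{i=1}^a I^{L-k}/I^{L-k+1}` induced by
`x ↦ ([x·λ_1], …, [x·λ_a])` is injective; elementwise: if `x ∈ I^{L-k-1}` and
`x·λ_i ∈ I^{L-k+1}` for every `i`, then `x ∈ I^{L-k}`. -/
theorem stmt_10 (p a : ℕ) (hp : p.Prime) (ha : 1 ≤ a) (F : Type*) [Field F] [CharP F p]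
    (k : ℕ) (hk : k ≤ a * (p - 1) - 1)
    (J : Ideal (MvPolynomial (Fin a) F))
    (hJ : J = Ideal.span (Set.range fun i : Fin a => MvPolynomial.X i ^ p))
    (lam : Fin a → (MvPolynomial (Fin a) F ⧸ J))
    (hlam : ∀ i, lam i = Ideal.Quotient.mk J (MvPolynomial.X i))
    (I : Ideal (MvPolynomial (Fin a) F ⧸ J))
    (hI : I = Ideal.span (Set.range lam)) :
    ∀ x : MvPolynomial (Fin a) F ⧸ J, x ∈ I ^ (a * (p - 1) - k - 1) →
      (∀ i : Fin a, x * lam i ∈ I ^ (a * (p - 1) - k + 1)) →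
      x ∈ I ^ (a * (p - 1) - k) :=
  stmt_10_general p a F k J hJ lam hlam I hI
end
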